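/- The interior of ℍ_N in ℂ⁴ equals {(a, x₁, x₂, x₃) ∈ ℂ⁴ : a ≠ 0 and (x₁, x₂, x₃, a + (x₁x₂ − x₃)/a) ∈ 𝔽}, and ℍ_N equals the union of its interior with the set {(0, x₁, x₂, x₁x₂) ∈ ℂ⁴ : (x₁, x₂, x₁x₂, 0) ∈ 𝔽}. -/

import Mathlib

/-- The operator norm of a 2×2 complex matrix, acting on the Euclidean space ℂ². -/
noncomputable def opNorm (A : Matrix (Fin 2) (Fin 2) ℂ) : ℝ :=
  ‖LinearMap.toContinuousLinearMap (Matrix.toEuclideanLin A)‖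

/-- The domain 𝔽 = {(a₁₁, a₂₂, det A, a₁₂ + a₂₁) : A ∈ M₂(ℂ), ‖A‖ < 1}. -/
noncomputable def domF : Set (ℂ × ℂ × ℂ × ℂ) :=
  {w | ∃ A : Matrix (Fin 2) (Fin 2) ℂ, opNorm A < 1 ∧
    w = (A 0 0, A 1 1, A.det, A 0 1 + A 1 0)}

/-- The normed hexablock ℍ_N = {(a₂₁, a₁₁, a₂₂, det A) : A ∈ M₂(ℂ), ‖A‖ < 1}. -/
noncomputable def HN : Set (ℂ × ℂ × ℂ × ℂ) :=
  {w | ∃ A : Matrix (Fin 2) (Fin 2) ℂ, opNorm A < 1 ∧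
    w = (A 1 0, A 0 0, A 1 1, A.det)}

/-! For `a ≠ 0`, a matrix with `a₂₁ = a`, diagonal `(x₁, x₂)` and determinant `x₃` must have
`a₁₂ = (x₁x₂ - x₃)/a`, so `ℍ_N ∩ {a ≠ 0}` is the open set where this matrix `hexMatrix a x₁ x₂ x₃`
is a strict contraction. A witness of `(x₁, x₂, x₃, a + (x₁x₂ - x₃)/a) ∈ 𝔽` has off-diagonal
entries with sum `a + (x₁x₂ - x₃)/a` and product `x₁x₂ - x₃`, so it is `hexMatrix a x₁ x₂ x₃` or its
transpose, and transposition preserves the operator norm. On `{a = 0}` the set `ℍ_N` lies in the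
hypersurface `x₃ = x₁x₂`, hence misses the interior; there the upper triangular witness can be
replaced by its diagonal part, whose norm is the largest diagonal entry and thus no larger. -/

open Matrix Topology
open scoped Matrix.Norms.L2Operator

theorem EuclideanSpace.norm_toLp_star {𝕜 ι : Type*} [RCLike 𝕜] [Fintype ι] (v : ι → 𝕜) :
    ‖WithLp.toLp 2 (star v)‖ = ‖WithLp.toLp 2 v‖ := by
  simp [EuclideanSpace.norm_eq]

namespace Matrix

variable {𝕜 m n : Type*} [RCLike 𝕜] [Fintype m] [Fintype n] [DecidableEq n]

theorem norm_entry_le_l2_opNorm (A : Matrix m n 𝕜) (i : m) (j : n) : ‖A i j‖ ≤ ‖A‖ := by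
  set e := EuclideanSpace.single j (1 : 𝕜)
  calc ‖A i j‖ = ‖(EuclideanSpace.equiv m 𝕜).symm (A *ᵥ e.ofLp) i‖ := by simp [e]
    _ ≤ ‖(EuclideanSpace.equiv m 𝕜).symm (A *ᵥ e.ofLp)‖ := PiLp.norm_apply_le _ _
    _ ≤ ‖A‖ * ‖e‖ := l2_opNorm_mulVec A _
    _ = ‖A‖ := by simp [e]

theorem l2_opNorm_map_star_le (A : Matrix m n 𝕜) : ‖A.map star‖ ≤ ‖A‖ := by
  rw [l2_opNorm_def]
  refine ContinuousLinearMap.opNorm_le_bound _ (norm_nonneg _) fun x => ?_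
  have hmul : A.map star *ᵥ x.ofLp = star (A *ᵥ star x.ofLp) := by
    ext i; simp [mulVec, dotProduct]
  calc _ = ‖WithLp.toLp 2 (star (A *ᵥ star x.ofLp))‖ := by rw [← hmul]; rfl
    _ = ‖WithLp.toLp 2 (A *ᵥ star x.ofLp)‖ := EuclideanSpace.norm_toLp_star _
    _ ≤ ‖A‖ * ‖WithLp.toLp 2 (star x.ofLp)‖ := l2_opNorm_mulVec A _
    _ = ‖A‖ * ‖x‖ := by rw [EuclideanSpace.norm_toLp_star]

theorem l2_opNorm_map_star (A : Matrix m n 𝕜) : ‖A.map star‖ = ‖A‖ := by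
  refine le_antisymm (l2_opNorm_map_star_le A) ?_
  calc ‖A‖ = ‖(A.map star).map star‖ := by congr 1; ext; simp
    _ ≤ ‖A.map star‖ := l2_opNorm_map_star_le _

theorem l2_opNorm_transpose [DecidableEq m] (A : Matrix m n 𝕜) : ‖Aᵀ‖ = ‖A‖ := by
  calc ‖Aᵀ‖ = ‖(A.map star)ᴴ‖ := by congr 1; ext; simp
    _ = ‖A‖ := by rw [l2_opNorm_conjTranspose, l2_opNorm_map_star]

theorem l2_opNorm_diagonal_diag_le (A : Matrix n n 𝕜) : ‖diagonal A.diag‖ ≤ ‖A‖ := by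
  rw [l2_opNorm_diagonal]
  exact pi_norm_le_iff_of_nonneg (norm_nonneg A) |>.2 fun i => norm_entry_le_l2_opNorm A i i

end Matrix

noncomputable def hexMatrix (a x₁ x₂ x₃ : ℂ) : Matrix (Fin 2) (Fin 2) ℂ :=
  !![x₁, (x₁ * x₂ - x₃) / a; a, x₂]

theorem opNorm_eq_l2_opNorm (A : Matrix (Fin 2) (Fin 2) ℂ) : opNorm A = ‖A‖ := rfl

section hexMatrix

variable {a x₁ x₂ x₃ : ℂ}

theorem det_hexMatrix (ha : a ≠ 0) : (hexMatrix a x₁ x₂ x₃).det = x₃ := by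
  rw [hexMatrix, det_fin_two_of]
  field_simp
  ring

theorem eq_hexMatrix {A : Matrix (Fin 2) (Fin 2) ℂ} (ha : a ≠ 0) (h₁₀ : A 1 0 = a)
    (h₀₀ : A 0 0 = x₁) (h₁₁ : A 1 1 = x₂) (hdet : A.det = x₃) : A = hexMatrix a x₁ x₂ x₃ := by
  have h₀₁ : A 0 1 = (x₁ * x₂ - x₃) / a := by
    rw [eq_div_iff ha, ← h₀₀, ← h₁₁, ← hdet, det_fin_two, h₁₀]
    ring
  rw [eta_fin_two A, hexMatrix, h₀₀, h₀₁, h₁₀, h₁₁]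

theorem mem_HN_iff_hexMatrix (ha : a ≠ 0) :
    (a, x₁, x₂, x₃) ∈ HN ↔ opNorm (hexMatrix a x₁ x₂ x₃) < 1 := by
  constructor
  · rintro ⟨A, hA, hw⟩
    simp only [Prod.mk.injEq] at hw
    obtain ⟨h₁₀, h₀₀, h₁₁, hdet⟩ := hw
    rwa [eq_hexMatrix ha h₁₀.symm h₀₀.symm h₁₁.symm hdet.symm] at hA
  · intro h
    refine ⟨_, h, ?_⟩
    rw [det_hexMatrix ha]
    simp [hexMatrix]

theorem mem_domF_iff_hexMatrix (ha : a ≠ 0) :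
    (x₁, x₂, x₃, a + (x₁ * x₂ - x₃) / a) ∈ domF ↔ opNorm (hexMatrix a x₁ x₂ x₃) < 1 := by
  constructor
  · rintro ⟨B, hB, hw⟩
    simp only [Prod.mk.injEq] at hw
    obtain ⟨h₀₀, h₁₁, hdet, hsum⟩ := hw
    have hprod : a * ((x₁ * x₂ - x₃) / a) = B 0 1 * B 1 0 := by
      rw [mul_div_cancel₀ _ ha, h₀₀, h₁₁, hdet, det_fin_two]
      ring
    have hroots : (B 1 0 - a) * (B 0 1 - a) = 0 := by linear_combination a * hsum - hprod
    rcases mul_eq_zero.1 hroots with h | h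
    · rwa [eq_hexMatrix ha (sub_eq_zero.1 h) h₀₀.symm h₁₁.symm hdet.symm] at hB
    · rwa [opNorm_eq_l2_opNorm, ← l2_opNorm_transpose, eq_hexMatrix (A := Bᵀ) ha
        (sub_eq_zero.1 h) h₀₀.symm h₁₁.symm ((det_transpose B).trans hdet.symm)] at hB
  · intro h
    refine ⟨_, h, ?_⟩
    rw [det_hexMatrix ha]
    simp [hexMatrix, add_comm]

end hexMatrix

theorem eq_mul_of_mem_HN {x₁ x₂ x₃ : ℂ} (h : (0, x₁, x₂, x₃) ∈ HN) : x₃ = x₁ * x₂ := by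
  obtain ⟨A, -, hw⟩ := h
  simp only [Prod.mk.injEq] at hw
  obtain ⟨h₁₀, h₀₀, h₁₁, hdet⟩ := hw
  rw [hdet, det_fin_two, ← h₁₀, h₀₀, h₁₁]
  ring

theorem mem_HN_iff_mem_domF {x₁ x₂ : ℂ} :
    (0, x₁, x₂, x₁ * x₂) ∈ HN ↔ (x₁, x₂, x₁ * x₂, 0) ∈ domF := by
  constructor
  · rintro ⟨A, hA, hw⟩
    simp only [Prod.mk.injEq] at hw
    obtain ⟨h₁₀, h₀₀, h₁₁, -⟩ := hw
    refine ⟨diagonal A.diag, (l2_opNorm_diagonal_diag_le A).trans_lt hA, ?_⟩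
    simp [h₀₀, h₁₁]
  · rintro ⟨B, hB, hw⟩
    simp only [Prod.mk.injEq] at hw
    obtain ⟨h₀₀, h₁₁, hdet, hsum⟩ := hw
    have h₁₀ : B 1 0 = 0 := by
      have hoff : B 0 1 * B 1 0 = 0 := by
        rw [det_fin_two, ← h₀₀, ← h₁₁] at hdet
        linear_combination hdet
      exact pow_eq_zero_iff two_ne_zero |>.1 (by linear_combination (-B 1 0) * hsum - hoff)
    refine ⟨B, hB, ?_⟩
    simp only [Prod.mk.injEq]
    exact ⟨h₁₀.symm, h₀₀, h₁₁, hdet⟩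

theorem fst_ne_zero_of_mem_interior_HN {w : ℂ × ℂ × ℂ × ℂ} (hw : w ∈ interior HN) : w.1 ≠ 0 := by
  obtain ⟨a, x₁, x₂, x₃⟩ := w
  rintro (rfl : a = 0)
  have hlim : Filter.Tendsto (fun t : ℂ => ((0 : ℂ), x₁, x₂, x₃ + t)) (𝓝[≠] 0)
      (𝓝 (0, x₁, x₂, x₃)) := by
    have hcont : Continuous fun t : ℂ => ((0 : ℂ), x₁, x₂, x₃ + t) := by fun_prop
    simpa using (hcont.tendsto 0).mono_left nhdsWithin_le_nhds
  obtain ⟨t, ht, ht0 : t ≠ 0⟩ := ((hlim.eventually (mem_interior_iff_mem_nhds.1 hw)).and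
    self_mem_nhdsWithin).exists
  have h₃ := eq_mul_of_mem_HN (interior_subset hw)
  have h₃t := eq_mul_of_mem_HN ht
  exact ht0 (by linear_combination h₃t - h₃)

theorem isOpen_hexMatrix_norm_lt_one :
    IsOpen {w : ℂ × ℂ × ℂ × ℂ | w.1 ≠ 0 ∧ opNorm (hexMatrix w.1 w.2.1 w.2.2.1 w.2.2.2) < 1} := by
  have hcont : ContinuousOn (fun w : ℂ × ℂ × ℂ × ℂ => hexMatrix w.1 w.2.1 w.2.2.1 w.2.2.2)
      {w | w.1 ≠ 0} := by
    refine continuousOn_pi.2 fun i => continuousOn_pi.2 fun j => ?_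
    fin_cases i <;> fin_cases j <;>
      simp only [hexMatrix, Fin.zero_eta, Fin.mk_one, Fin.isValue, of_apply, cons_val',
        cons_val_zero, cons_val_one, cons_val_fin_one] <;>
      fun_prop (disch := exact fun w hw => hw)
  exact hcont.isOpen_inter_preimage (isOpen_ne_fun continuous_fst continuous_const)
    (isOpen_lt continuous_norm continuous_const)

theorem interior_HN :
    interior HN = {w | w.1 ≠ 0 ∧ opNorm (hexMatrix w.1 w.2.1 w.2.2.1 w.2.2.2) < 1} := by
  refine subset_antisymm (fun w hw => ?_) (interior_maximal ?_ isOpen_hexMatrix_norm_lt_one)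
  · have ha := fst_ne_zero_of_mem_interior_HN hw
    exact ⟨ha, (mem_HN_iff_hexMatrix ha).1 (interior_subset hw)⟩
  · rintro ⟨a, x₁, x₂, x₃⟩ ⟨ha, h⟩
    exact (mem_HN_iff_hexMatrix ha).2 h

/-- Corollary 2.13: int(ℍ_N) = {(a, x₁, x₂, x₃) : a ≠ 0, (x₁, x₂, x₃, a + (x₁x₂−x₃)/a) ∈ 𝔽},
and ℍ_N = int(ℍ_N) ∪ {(0, x₁, x₂, x₁x₂) : (x₁, x₂, x₁x₂, 0) ∈ 𝔽}. -/
theorem stmt13 :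
    interior HN = {w : ℂ × ℂ × ℂ × ℂ | w.1 ≠ 0 ∧
      (w.2.1, w.2.2.1, w.2.2.2, w.1 + (w.2.1 * w.2.2.1 - w.2.2.2) / w.1) ∈ domF} ∧
    HN = interior HN ∪
      {w : ℂ × ℂ × ℂ × ℂ | ∃ x1 x2 : ℂ, w = ((0 : ℂ), x1, x2, x1 * x2) ∧
        (x1, x2, x1 * x2, (0 : ℂ)) ∈ domF} := by
  refine ⟨?_, ?_⟩
  · rw [interior_HN]
    ext ⟨a, x₁, x₂, x₃⟩
    exact and_congr_right fun ha => (mem_domF_iff_hexMatrix ha).symm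
  · ext ⟨a, x₁, x₂, x₃⟩
    rcases eq_or_ne a 0 with rfl | ha
    · constructor
      · intro h
        obtain rfl := eq_mul_of_mem_HN h
        exact Or.inr ⟨x₁, x₂, rfl, mem_HN_iff_mem_domF.1 h⟩
      · rintro (h | ⟨y₁, y₂, hw, hF⟩)
        · exact interior_subset h
        · simp only [Prod.mk.injEq, true_and] at hw
          obtain ⟨rfl, rfl, rfl⟩ := hw
          exact mem_HN_iff_mem_domF.2 hF
    · rw [interior_HN]
      simp [mem_HN_iff_hexMatrix ha, ha]
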